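/- Let G be a bipartite graph with vertex set A ⊔ B and all edges between A and B, and let X be the simplicial complex on A ⊔ B whose Stanley–Reisner ideal is the edge ideal of G. Let Y be the simplicial complex on B consisting of all subsets b ⊆ B such that b ∪ {a} is a face of X for some a ∈ A (equivalently, there is some a ∈ A with no edge from a to any element of b). Then X is homotopy equivalent to the suspension of Y. -/

import Mathlib

/-!
Common infrastructure: abstract simplicial complexes, geometric realization,
homotopy equivalence, reduced simplicial cohomology, squarefree monomial ideals
(encoded as upward closed families of finite sets), Koszul-complex multigraded
Betti numbers, and letterplace ideals of posets.
-/

noncomputable section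

open Finset

attribute [local instance] Classical.propDecidable

universe u v w

/-- An abstract simplicial complex on the vertex type `V`: a collection of
finite subsets of `V` (the faces) closed under taking subsets. -/
structure SComplex (V : Type u) where
  faces : Set (Finset V)
  down_closed : ∀ {F G : Finset V}, F ∈ faces → G ⊆ F → G ∈ faces

namespace SComplex

/-- The geometric realization of a simplicial complex: the subspace of `V → ℝ`
consisting of the convex weight functions supported on a face. -/
def realization {V : Type u} [Fintype V] (X : SComplex V) : Set (V → ℝ) :=
  {f | (∀ v, 0 ≤ f v) ∧ (∑ v, f v) = 1 ∧ ∃ F ∈ X.faces, ∀ v, f v ≠ 0 → v ∈ F}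

/-- Two simplicial complexes are homotopy equivalent if their geometric
realizations are homotopy equivalent topological spaces. -/
def HEquiv {V : Type u} {W : Type v} [Fintype V] [Fintype W]
    (X : SComplex V) (Y : SComplex W) : Prop :=
  Nonempty (ContinuousMap.HomotopyEquiv X.realization Y.realization)

/-- Isomorphism ("equality up to relabeling of vertices") of simplicial
complexes: an order isomorphism between the face posets. -/
def IsIsomorphic {V : Type u} {W : Type v} (X : SComplex V) (Y : SComplex W) : Prop :=
  Nonempty ({F : Finset V // F ∈ X.faces} ≃o {G : Finset W // G ∈ Y.faces})

/-- The induced subcomplex on a subset `S` of the vertex set. -/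
def restrict {V : Type u} (X : SComplex V) (S : Set V) : SComplex V where
  faces := {F | F ∈ X.faces ∧ ∀ v ∈ F, v ∈ S}
  down_closed := by
    intro F G hF hGF
    exact ⟨X.down_closed hF.1 hGF, fun v hv => hF.2 v (hGF hv)⟩

/-- The join of two simplicial complexes (on the disjoint union of the two
vertex types). -/
def join {V : Type u} {W : Type v} (X : SComplex V) (Y : SComplex W) :
    SComplex (V ⊕ W) where
  faces := {F | F.preimage Sum.inl Sum.inl_injective.injOn ∈ X.faces ∧
                F.preimage Sum.inr Sum.inr_injective.injOn ∈ Y.faces}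
  down_closed := by
    intro F G hF hGF
    constructor
    · exact X.down_closed hF.1 fun x hx => by
        simp only [Finset.mem_preimage] at hx ⊢
        exact hGF hx
    · exact Y.down_closed hF.2 fun x hx => by
        simp only [Finset.mem_preimage] at hx ⊢
        exact hGF hx

/-- The join of a finite family of simplicial complexes on pairwise disjoint
vertex types. -/
def bigJoin {ι : Type u} {V : ι → Type v} (X : ∀ i, SComplex (V i)) :
    SComplex (Σ i, V i) where
  faces := {F | ∀ i, F.preimage (Sigma.mk i) sigma_mk_injective.injOn ∈ (X i).faces}
  down_closed := by
    intro F G hF hGF i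
    exact (X i).down_closed (hF i) fun x hx => by
      simp only [Finset.mem_preimage] at hx ⊢
      exact hGF hx

/-- The simplicial complex consisting of two disjoint points. -/
def twoPoint : SComplex Bool where
  faces := {F | F.card ≤ 1}
  down_closed := by
    intro F G hF hGF
    exact le_trans (Finset.card_le_card hGF) hF

/-- The suspension of a simplicial complex: its join with two points. -/
def suspension {V : Type u} (X : SComplex V) : SComplex (V ⊕ Bool) :=
  join X twoPoint

/-- Vertex type of the `m`-fold iterated suspension. -/
def SuspType (V : Type u) : ℕ → Type u
  | 0 => V
  | m + 1 => SuspType V m ⊕ Bool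

/-- The `m`-fold iterated suspension of a simplicial complex. -/
def iterSusp {V : Type u} (X : SComplex V) : (m : ℕ) → SComplex (SuspType V m)
  | 0 => X
  | m + 1 => suspension (iterSusp X m)

end SComplex

/-- Position of `x` with respect to a finite set: the number of elements of `F`
preceding `x` in a fixed well-ordering of the vertex type.  Used for the signs
in (co)chain complexes. -/
def vpos {V : Type u} (F : Finset V) (x : V) : ℕ :=
  (F.filter fun w => WellOrderingRel w x).card

namespace SComplex

variable (k : Type w) [Field k]

/-- The faces of dimension `i` (i.e. of cardinality `i + 1`), `i ∈ ℤ`. -/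
abbrev Face {V : Type u} (X : SComplex V) (i : ℤ) : Type u :=
  {F : Finset V // F ∈ X.faces ∧ (F.card : ℤ) = i + 1}

/-- Reduced simplicial `i`-cochains of `X` with coefficients in `k`
(the empty face in dimension `-1` is included). -/
abbrev cochain {V : Type u} (X : SComplex V) (i : ℤ) : Type (max u w) :=
  Face X i → k

/-- Evaluation of a cochain on an arbitrary finite set (zero if the set is not
a face of the appropriate dimension). -/
def evalC {V : Type u} {X : SComplex V} {i : ℤ} (f : cochain k X i) (F : Finset V) : k :=
  if h : F ∈ X.faces ∧ (F.card : ℤ) = i + 1 then f ⟨F, h⟩ else 0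

theorem evalC_add {V : Type u} {X : SComplex V} {i : ℤ} (f g : cochain k X i)
    (F : Finset V) : evalC k (f + g) F = evalC k f F + evalC k g F := by
  unfold evalC
  split_ifs <;> simp

theorem evalC_smul {V : Type u} {X : SComplex V} {i : ℤ} (s : k) (f : cochain k X i)
    (F : Finset V) : evalC k (s • f) F = s * evalC k f F := by
  unfold evalC
  split_ifs <;> simp

/-- The simplicial coboundary map on reduced cochains. -/
def coboundary {V : Type u} (X : SComplex V) (i : ℤ) :
    cochain k X i →ₗ[k] cochain k X (i + 1) where
  toFun f F := ∑ v ∈ F.1, ((-1 : k) ^ vpos F.1 v) * evalC k f (F.1.erase v)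
  map_add' f g := by
    funext F
    show (∑ v ∈ F.1, ((-1 : k) ^ vpos F.1 v) * evalC k (f + g) (F.1.erase v))
      = (∑ v ∈ F.1, ((-1 : k) ^ vpos F.1 v) * evalC k f (F.1.erase v))
      + (∑ v ∈ F.1, ((-1 : k) ^ vpos F.1 v) * evalC k g (F.1.erase v))
    rw [← Finset.sum_add_distrib]
    exact Finset.sum_congr rfl fun v _ => by rw [evalC_add, mul_add]
  map_smul' s f := by
    funext F
    show (∑ v ∈ F.1, ((-1 : k) ^ vpos F.1 v) * evalC k (s • f) (F.1.erase v))
      = s * ∑ v ∈ F.1, ((-1 : k) ^ vpos F.1 v) * evalC k f (F.1.erase v)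
    rw [Finset.mul_sum]
    exact Finset.sum_congr rfl fun v _ => by rw [evalC_smul]; ring

/-- The dimension of the `i`-th reduced simplicial cohomology of `X` with
coefficients in the field `k` (computed as `dim ker d^i - dim im d^(i-1)`). -/
def redCohomDim {V : Type u} (X : SComplex V) (i : ℤ) : ℕ :=
  Module.finrank k (LinearMap.ker (coboundary k X i)) -
    Module.finrank k (LinearMap.range (coboundary k X (i - 1)))

/-- The generating series `t·H̃(X,t) = ∑_{i ≥ -1} t^{i+1} dim_k H̃^i(X;k)`,
an element of `ℕ⟦t⟧`. -/
def hSeries {V : Type u} (X : SComplex V) : PowerSeries ℕ :=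
  PowerSeries.mk fun m => redCohomDim k X ((m : ℤ) - 1)

end SComplex

/-- A squarefree monomial ideal on the set of variables `W`, encoded by the
upward closed family of the supports of the squarefree monomials belonging
to it. -/
structure SqfIdeal (W : Type u) where
  carrier : Set (Finset W)
  up_closed : ∀ {S T : Finset W}, S ∈ carrier → S ⊆ T → T ∈ carrier

namespace SqfIdeal

/-- The basis of the degree-`R` strand of the Koszul complex `K(x;I)` in
homological degree `i`. -/
abbrev KBasis {W : Type u} (I : SqfIdeal W) (R : Finset W) (i : ℤ) : Type u :=
  {S : Finset W // S ⊆ R ∧ (S.card : ℤ) = i ∧ R \ S ∈ I.carrier}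

/-- The degree-`R` strand of the Koszul complex of `I`, in homological
degree `i`, with coefficients in `k`. -/
abbrev kchain (k : Type w) [Field k] {W : Type u} (I : SqfIdeal W) (R : Finset W)
    (i : ℤ) : Type (max u w) :=
  KBasis I R i → k

variable (k : Type w) [Field k]

/-- Evaluation of a Koszul chain on an arbitrary finite set. -/
def evalK {W : Type u} {I : SqfIdeal W} {R : Finset W} {i : ℤ}
    (f : kchain k I R i) (S : Finset W) : k :=
  if h : S ⊆ R ∧ (S.card : ℤ) = i ∧ R \ S ∈ I.carrier then f ⟨S, h⟩ else 0

theorem evalK_add {W : Type u} {I : SqfIdeal W} {R : Finset W} {i : ℤ}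
    (f g : kchain k I R i) (S : Finset W) :
    evalK k (f + g) S = evalK k f S + evalK k g S := by
  unfold evalK
  split_ifs <;> simp

theorem evalK_smul {W : Type u} {I : SqfIdeal W} {R : Finset W} {i : ℤ}
    (s : k) (f : kchain k I R i) (S : Finset W) :
    evalK k (s • f) S = s * evalK k f S := by
  unfold evalK
  split_ifs <;> simp

/-- The Koszul differential on the degree-`R` strand (as a map of the dual
function spaces). -/
def koszulD {W : Type u} (I : SqfIdeal W) (R : Finset W) (i : ℤ) :
    kchain k I R i →ₗ[k] kchain k I R (i - 1) where
  toFun f S := ∑ v ∈ R \ S.1, ((-1 : k) ^ vpos S.1 v) * evalK k f (insert v S.1)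
  map_add' f g := by
    funext S
    show (∑ v ∈ R \ S.1, ((-1 : k) ^ vpos S.1 v) * evalK k (f + g) (insert v S.1))
      = (∑ v ∈ R \ S.1, ((-1 : k) ^ vpos S.1 v) * evalK k f (insert v S.1))
      + (∑ v ∈ R \ S.1, ((-1 : k) ^ vpos S.1 v) * evalK k g (insert v S.1))
    rw [← Finset.sum_add_distrib]
    exact Finset.sum_congr rfl fun v _ => by rw [evalK_add, mul_add]
  map_smul' s f := by
    funext S
    show (∑ v ∈ R \ S.1, ((-1 : k) ^ vpos S.1 v) * evalK k (s • f) (insert v S.1))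
      = s * ∑ v ∈ R \ S.1, ((-1 : k) ^ vpos S.1 v) * evalK k f (insert v S.1)
    rw [Finset.mul_sum]
    exact Finset.sum_congr rfl fun v _ => by rw [evalK_smul]; ring

end SqfIdeal

/-- The multigraded Betti number `β_{i,R}(I) = dim_k Tor_i(I,k)_R` of a
squarefree monomial ideal in the squarefree multidegree `R`, computed as the
dimension of the `i`-th homology of the degree-`R` strand of the Koszul
complex. -/
def multiBetti (k : Type w) [Field k] {W : Type u} (I : SqfIdeal W) (i : ℤ)
    (R : Finset W) : ℕ :=
  Module.finrank k (LinearMap.ker (SqfIdeal.koszulD k I R i)) -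
    Module.finrank k (LinearMap.range (SqfIdeal.koszulD k I R (i + 1)))

/-- The graded Betti number `β_{i,j}(I) = dim_k Tor_i(I,k)_j` of a squarefree
monomial ideal: the sum of the multigraded Betti numbers over the (squarefree)
multidegrees of cardinality `j`. -/
def gradedBetti (k : Type w) [Field k] {W : Type u} [Fintype W] (I : SqfIdeal W)
    (i : ℤ) (j : ℤ) : ℕ :=
  if 0 ≤ j then
    ∑ R ∈ Finset.powersetCard j.toNat (Finset.univ : Finset W), multiBetti k I i R
  else 0

/-- The `n`-th letterplace ideal `L(n,P)` of a poset `P`: the squarefree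
monomial ideal on the variables `x_{(i,p)}`, `(i,p) ∈ [n] × P`, generated by
the monomials `x_{(1,p₁)} ⋯ x_{(n,pₙ)}` with `p₁ ≤ p₂ ≤ ⋯ ≤ pₙ` in `P`. -/
def letterplace (n : ℕ) (P : Type u) [PartialOrder P] : SqfIdeal (Fin n × P) where
  carrier := {T | ∃ c : Fin n → P, Monotone c ∧ ∀ i, (i, c i) ∈ T}
  up_closed := by
    rintro S T ⟨c, hc, hm⟩ hST
    exact ⟨c, hc, fun i => hST (hm i)⟩

/-- The `i`-th part `R_i ⊆ P` of a multidegree `R ⊆ [n] × P`. -/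
def part {n : ℕ} {P : Type u} (R : Finset (Fin n × P)) (i : Fin n) : Finset P :=
  (R.filter fun q => q.1 = i).image Prod.snd

/-- The set of maximal elements of the induced subposet on `A`. -/
def maxSet {P : Type u} [PartialOrder P] (A : Finset P) : Finset P :=
  A.filter fun a => ∀ b ∈ A, a ≤ b → a = b

/-- The set of minimal elements of the induced subposet on `A`. -/
def minSet {P : Type u} [PartialOrder P] (A : Finset P) : Finset P :=
  A.filter fun a => ∀ b ∈ A, b ≤ a → a = b

/-- The transitive order `A ≤ B` on subsets of a poset: every maximal element
of `A` is below some minimal element of `B`, and every minimal element of `B`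
is above some maximal element of `A`. -/
def subsetLE {P : Type u} [PartialOrder P] (A B : Finset P) : Prop :=
  (∀ a ∈ maxSet A, ∃ b ∈ minSet B, a ≤ b) ∧
  (∀ b ∈ minSet B, ∃ a ∈ maxSet A, a ≤ b)

/-- The independence complex of the bipartite graph on two disjoint copies of
`P`, with left vertex set `A`, right vertex set `B`, and edges the pairs
`(p, q) ∈ A × B` with `p ≤ q` in `P`. -/
def XComplex {P : Type u} [PartialOrder P] (A B : Finset P) : SComplex (P ⊕ P) where
  faces := {F | (∀ x ∈ F, Sum.elim (· ∈ A) (· ∈ B) x) ∧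
                ∀ p q : P, Sum.inl p ∈ F → Sum.inr q ∈ F → ¬ p ≤ q}
  down_closed := by
    intro F G hF hGF
    exact ⟨fun x hx => hF.1 x (hGF hx), fun p q hp hq => hF.2 p q (hGF hp) (hGF hq)⟩

/-- `Y₁`: the simplicial complex on `A` whose faces are the subsets `F ⊆ A`
such that some `b ∈ B` dominates no element of `F`. -/
def Y1Complex {P : Type u} [PartialOrder P] (A B : Finset P) : SComplex P where
  faces := {F | (∀ x ∈ F, x ∈ A) ∧ ∃ b ∈ B, ∀ a ∈ F, ¬ a ≤ b}
  down_closed := by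
    rintro F G ⟨hFA, b, hb, hFb⟩ hGF
    exact ⟨fun x hx => hFA x (hGF hx), b, hb, fun a ha => hFb a (hGF ha)⟩

/-- `Y₂`: the simplicial complex on `B` whose faces are the subsets `F ⊆ B`
such that some `a ∈ A` is dominated by no element of `F`. -/
def Y2Complex {P : Type u} [PartialOrder P] (A B : Finset P) : SComplex P where
  faces := {F | (∀ x ∈ F, x ∈ B) ∧ ∃ a ∈ A, ∀ b ∈ F, ¬ a ≤ b}
  down_closed := by
    rintro F G ⟨hFB, a, ha, hFa⟩ hGF
    exact ⟨fun x hx => hFB x (hGF hx), a, ha, fun b hb => hFa b (hGF hb)⟩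

/-- The restriction `Δ(n,P)|_R` of the Stanley–Reisner complex of the
letterplace ideal `L(n,P)` to the vertex set `R`. -/
def deltaRes (n : ℕ) (P : Type u) [PartialOrder P] (R : Finset (Fin n × P)) :
    SComplex (Fin n × P) where
  faces := {F | F ⊆ R ∧ ¬ ∃ c : Fin n → P, Monotone c ∧ ∀ i, (i, c i) ∈ F}
  down_closed := by
    rintro F G ⟨hFR, hF⟩ hGF
    exact ⟨hGF.trans hFR, fun ⟨c, hc, hm⟩ => hF ⟨c, hc, fun i => hGF (hm i)⟩⟩

/-- `A` is a maximal antichain of the poset `P`. -/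
def IsMaxAntichainFinset {P : Type u} [PartialOrder P] (A : Finset P) : Prop :=
  IsAntichain (· ≤ ·) (A : Set P) ∧
    ∀ B : Finset P, IsAntichain (· ≤ ·) (B : Set P) → A ⊆ B → A = B

/-- The maximal cardinality of an antichain in the finite poset `P`. -/
def maxAntichainCard (P : Type u) [PartialOrder P] [Fintype P] : ℕ :=
  Finset.sup (Finset.univ.filter fun A : Finset P => IsAntichain (· ≤ ·) (A : Set P))
    Finset.card

/-- The independence complex of a bipartite graph, with parts `A` and `B` and
edge relation `E`. -/
def bipIndep {A : Type u} {B : Type v} (E : A → B → Prop) : SComplex (A ⊕ B) where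
  faces := {F | ∀ a b, Sum.inl a ∈ F → Sum.inr b ∈ F → ¬ E a b}
  down_closed := by
    intro F G hF hGF a b ha hb
    exact hF a b (hGF ha) (hGF hb)

/-- The simplicial complex `Y` on `B` consisting of the subsets `F ⊆ B` such
that `F ∪ {a}` is independent for some `a ∈ A`, i.e. some `a ∈ A` has no edge
to any element of `F`. -/
def nbrComplex {A : Type u} {B : Type v} (E : A → B → Prop) : SComplex B where
  faces := {F | ∃ a : A, ∀ b ∈ F, ¬ E a b}
  down_closed := by
    rintro F G ⟨a, ha⟩ hGF
    exact ⟨a, fun b hb => ha b (hGF hb)⟩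

/-!
Both directions are explicit maps between the geometric realizations. `toSuspFun` sends a point
with mass `α` on `A` and `β` on `B` to height `α - β` between the poles (the pole `s₀` on the
side of `A`), keeping the profile of the mass on `B`. The inverse `ofSuspFun` has to choose,
continuously, vertices of `A` independent of what is left on `B`: it truncates the equatorial
coordinates at the level `t = g s₀` and gives `a ∈ A` the weight `(t - mass of the neighbours
of a)⁺`, so that no neighbour of a witness of positive weight survives the truncation.
Each composite is joined to the identity through `bipTrunc`, resp. `suspTrunc`, by two
straight-line homotopies; a straight line between two maps stays in the realization as long
as their supports lie in a common face.
-/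

open Function (support)
open Sum (inl inr elim)

theorem continuous_sumElim_pi {Z ι ι' : Type*} [TopologicalSpace Z] {R : Z → ι → ℝ}
    {P : Z → ι' → ℝ} (hR : Continuous R) (hP : Continuous P) :
    Continuous fun z => elim (R z) (P z) :=
  Homeomorph.sumArrowHomeomorphProdArrow.symm.continuous.comp (hR.prodMk hP)

section Rescale

variable {ι : Type*} [Fintype ι]

/-- This has total mass `k` unless `u` sums to `0`, in which case it is `0`. -/
def rescale (k : ℝ) (u : ι → ℝ) : ι → ℝ := fun i => k * (u i / ∑ j, u j)

theorem rescale_nonneg {k : ℝ} {u : ι → ℝ} (hk : 0 ≤ k) (hu : ∀ i, 0 ≤ u i) (i : ι) :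
    0 ≤ rescale k u i :=
  mul_nonneg hk (div_nonneg (hu i) (sum_nonneg fun j _ => hu j))

theorem sum_rescale {k : ℝ} {u : ι → ℝ} (hk : ∑ i, u i = 0 → k = 0) :
    ∑ i, rescale k u i = k := by
  simp only [rescale, ← mul_sum, ← sum_div]
  by_cases h : ∑ i, u i = 0
  · simp [h, hk h]
  · rw [div_self h, mul_one]

@[simp]
theorem rescale_zero (u : ι → ℝ) : rescale 0 u = 0 := by
  ext i
  simp [rescale]

theorem ne_zero_of_rescale_ne_zero {k : ℝ} {u : ι → ℝ} {i : ι} (h : rescale k u i ≠ 0) :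
    k ≠ 0 ∧ u i ≠ 0 :=
  ⟨fun hk => h (by simp [rescale, hk]), fun hu => h (by simp [rescale, hu])⟩

theorem rescale_le {k : ℝ} {u : ι → ℝ} (hk : 0 ≤ k) (hu : ∀ i, 0 ≤ u i) (i : ι) :
    rescale k u i ≤ k :=
  mul_le_of_le_one_right hk <| div_le_one_of_le₀ (single_le_sum (fun j _ => hu j) (mem_univ i))
    (sum_nonneg fun j _ => hu j)

theorem continuous_rescale {Z : Type*} [TopologicalSpace Z] {k : Z → ℝ} {u : Z → ι → ℝ}
    (hk : Continuous k) (hu : Continuous u) (hk0 : ∀ z, 0 ≤ k z) (hu0 : ∀ z i, 0 ≤ u z i)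
    (hvan : ∀ z, ∑ i, u z i = 0 → k z = 0) : Continuous fun z => rescale (k z) (u z) := by
  refine continuous_pi fun i => continuous_iff_continuousAt.2 fun z₀ => ?_
  by_cases h : ∑ j, u z₀ j = 0
  · -- squeezed between `0` and `k`, which vanishes at `z₀`
    have hk₀ := hvan z₀ h
    have hlim := hk.tendsto z₀
    rw [hk₀] at hlim
    simpa [ContinuousAt, rescale, hk₀] using
      squeeze_zero (fun z => rescale_nonneg (hk0 z) (hu0 z) i)
        (fun z => rescale_le (hk0 z) (hu0 z) i) hlim
  · have hsum : Continuous fun z => ∑ j, u z j := by fun_prop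
    exact hk.continuousAt.mul
      (((continuous_apply i).comp hu).continuousAt.div hsum.continuousAt h)

end Rescale

namespace SComplex

variable {V : Type*}

def Carries (K : SComplex V) (s : Set V) : Prop := ∃ F ∈ K.faces, s ⊆ ↑F

theorem Carries.mono {K : SComplex V} {s t : Set V} (h : K.Carries t) (hst : s ⊆ t) :
    K.Carries s :=
  let ⟨F, hF, htF⟩ := h
  ⟨F, hF, hst.trans htF⟩

theorem carries_iff_toFinset_mem {K : SComplex V} {s : Set V} (hs : s.Finite) :
    K.Carries s ↔ hs.toFinset ∈ K.faces :=
  ⟨fun ⟨_, hF, hsF⟩ => K.down_closed hF (hs.toFinset_subset.2 hsF),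
    fun h => ⟨_, h, hs.coe_toFinset.ge⟩⟩

theorem mem_realization_iff [Fintype V] {K : SComplex V} {f : V → ℝ} :
    f ∈ K.realization ↔ (∀ v, 0 ≤ f v) ∧ ∑ v, f v = 1 ∧ K.Carries (support f) :=
  Iff.rfl

theorem carries_suspension_iff [Finite V] {K : SComplex V} {s : Set (V ⊕ Bool)} :
    (suspension K).Carries s ↔
      K.Carries (Sum.inl ⁻¹' s) ∧ ¬(Sum.inr false ∈ s ∧ Sum.inr true ∈ s) := by
  have hs : s.Finite := Set.toFinite s
  have hinl : hs.toFinset.preimage Sum.inl Sum.inl_injective.injOn =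
      (Set.toFinite (Sum.inl ⁻¹' s)).toFinset := by
    ext; simp
  rw [carries_iff_toFinset_mem hs, carries_iff_toFinset_mem (Set.toFinite _)]
  simp only [suspension, join, twoPoint, Set.mem_ofPred_eq, Finset.card_le_one, hinl,
    Finset.mem_preimage, Set.Finite.mem_toFinset, Bool.forall_bool]
  tauto

theorem homotopic_of_carries [Fintype V] {Z : Type*} [TopologicalSpace Z] {K : SComplex V}
    {U W : C(Z, K.realization)}
    (h : ∀ z, K.Carries (support (U z : V → ℝ) ∪ support (W z : V → ℝ))) : U.Homotopic W := by
  have hmem (t : unitInterval) (z : Z) :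
      (1 - (t : ℝ)) • (U z : V → ℝ) + (t : ℝ) • (W z : V → ℝ) ∈ K.realization := by
    obtain ⟨hU0, hU1, -⟩ := mem_realization_iff.1 (U z).2
    obtain ⟨hW0, hW1, -⟩ := mem_realization_iff.1 (W z).2
    refine mem_realization_iff.2 ⟨fun v => ?_, ?_, (h z).mono fun v hv => ?_⟩
    · have := hU0 v; have := hW0 v; have := t.2.1; have := t.2.2
      simp only [Pi.add_apply, Pi.smul_apply, smul_eq_mul]
      nlinarith
    · simp [sum_add_distrib, ← mul_sum, hU1, hW1]
    · by_contra hv'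
      simp_all
  exact ⟨{ toFun := fun x => ⟨_, hmem x.1 x.2⟩
           continuous_toFun := Continuous.subtype_mk (by fun_prop) _
           map_zero_left := fun z => by ext; simp
           map_one_left := fun z => by ext; simp }⟩

theorem homotopic_id_of_support_subset [Fintype V] {K : SComplex V}
    {U : C(K.realization, K.realization)} (h : ∀ p, support (U p : V → ℝ) ⊆ support (p : V → ℝ)) :
    (ContinuousMap.id _).Homotopic U :=
  homotopic_of_carries fun p =>
    (mem_realization_iff.1 p.2).2.2.mono (Set.union_subset subset_rfl (h p))

end SComplex

theorem pos_of_max_zero_ne_zero {x : ℝ} (h : max x 0 ≠ 0) : 0 < x :=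
  lt_of_not_ge fun hx => h (max_eq_right hx)

section Truncate

variable {B : Type*} {t : ℝ} {y : B → ℝ}

def truncate (t : ℝ) (y : B → ℝ) : B → ℝ := fun b => max (y b - t) 0

theorem truncate_nonneg (t : ℝ) (y : B → ℝ) (b : B) : 0 ≤ truncate t y b := le_max_right _ _

theorem truncate_le (ht : 0 ≤ t) (hy : ∀ b, 0 ≤ y b) (b : B) : truncate t y b ≤ y b :=
  max_le (by linarith) (hy b)

theorem lt_of_truncate_ne_zero {b : B} (h : truncate t y b ≠ 0) : t < y b := by
  have := pos_of_max_zero_ne_zero h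
  linarith

theorem truncate_zero_left (hy : ∀ b, 0 ≤ y b) : truncate 0 y = y :=
  funext fun b => by simp [truncate, hy b]

theorem support_truncate_subset (ht : 0 ≤ t) : support (truncate t y) ⊆ support y := by
  intro b hb hy
  have := lt_of_truncate_ne_zero hb
  rw [hy] at this
  linarith

end Truncate

section Witness

variable {A B : Type*} [Fintype B] (E : A → B → Prop)

def nbrMass (y : B → ℝ) (a : A) : ℝ := ∑ b with E a b, y b

def witnessWeight (t : ℝ) (y : B → ℝ) (a : A) : ℝ := max (t - nbrMass E y a) 0

variable {E} {t : ℝ} {y : B → ℝ}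

theorem sum_truncate_le (ht : 0 ≤ t) (hy : ∀ b, 0 ≤ y b) : ∑ b, truncate t y b ≤ ∑ b, y b :=
  sum_le_sum fun b _ => truncate_le ht hy b

theorem witnessWeight_nonneg (a : A) : 0 ≤ witnessWeight E t y a := le_max_right _ _

/-- The neighbours of `a` carry total mass below `t`, so the truncation cuts off each of them. -/
theorem not_adj_of_witnessWeight_ne_zero (hy : ∀ b, 0 ≤ y b) {a : A} {b : B}
    (ha : witnessWeight E t y a ≠ 0) (hb : truncate t y b ≠ 0) : ¬E a b := fun hab => by
  have hlt := pos_of_max_zero_ne_zero ha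
  have hle : y b ≤ nbrMass E y a :=
    single_le_sum (fun b _ => hy b) (mem_filter.2 ⟨mem_univ b, hab⟩)
  linarith [lt_of_truncate_ne_zero hb]

theorem eq_zero_of_sum_witnessWeight_eq_zero [Fintype A] (ht : 0 ≤ t)
    (hwit : ∃ a, ∀ b, y b ≠ 0 → ¬E a b) (h : ∑ a, witnessWeight E t y a = 0) : t = 0 := by
  obtain ⟨a, ha⟩ := hwit
  have hmass : nbrMass E y a = 0 :=
    sum_eq_zero fun b hb => by_contra fun hyb => ha b hyb (mem_filter.1 hb).2
  have hw : witnessWeight E t y a = t := by simp [witnessWeight, hmass, ht]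
  rw [← hw]
  exact (sum_eq_zero_iff_of_nonneg fun a _ => witnessWeight_nonneg a).1 h a (mem_univ a)

end Witness

section Suspension

variable {A B : Type*} [Fintype B] (E : A → B → Prop)

theorem carries_nbrComplex_iff {s : Set B} :
    (nbrComplex E).Carries s ↔ ∃ a, ∀ b ∈ s, ¬E a b := by
  rw [SComplex.carries_iff_toFinset_mem (Set.toFinite s)]
  simp [nbrComplex]

theorem carries_suspension_nbrComplex_iff {s : Set (B ⊕ Bool)} :
    (SComplex.suspension (nbrComplex E)).Carries s ↔
      (∃ a, ∀ b, inl b ∈ s → ¬E a b) ∧ ¬(inr false ∈ s ∧ inr true ∈ s) := by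
  simp [SComplex.carries_suspension_iff, carries_nbrComplex_iff]

variable {E}

theorem mem_suspension_realization_iff {g : B ⊕ Bool → ℝ} :
    g ∈ (SComplex.suspension (nbrComplex E)).realization ↔ (∀ v, 0 ≤ g v) ∧
      ∑ b, g (inl b) + g (inr false) + g (inr true) = 1 ∧
      (∃ a, ∀ b, g (inl b) ≠ 0 → ¬E a b) ∧ (g (inr false) = 0 ∨ g (inr true) = 0) := by
  simp [SComplex.mem_realization_iff, carries_suspension_nbrComplex_iff, Fintype.sum_sum_type,
    add_comm (g (inr true)), ← add_assoc, or_iff_not_imp_left]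

end Suspension

section Bipartite

variable {A B : Type*} [Fintype A] [Fintype B] (E : A → B → Prop)

theorem carries_bipIndep_iff {s : Set (A ⊕ B)} :
    (bipIndep E).Carries s ↔ ∀ a b, inl a ∈ s → inr b ∈ s → ¬E a b := by
  rw [SComplex.carries_iff_toFinset_mem (Set.toFinite s)]
  simp [bipIndep]

def massA (f : A ⊕ B → ℝ) : ℝ := ∑ a, f (inl a)

def massB (f : A ⊕ B → ℝ) : ℝ := ∑ b, f (inr b)

variable {E}

theorem mem_bipIndep_realization_iff {f : A ⊕ B → ℝ} :
    f ∈ (bipIndep E).realization ↔ (∀ v, 0 ≤ f v) ∧ massA f + massB f = 1 ∧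
      ∀ a b, f (inl a) ≠ 0 → f (inr b) ≠ 0 → ¬E a b := by
  simp [SComplex.mem_realization_iff, carries_bipIndep_iff, Fintype.sum_sum_type, massA, massB]

theorem massA_nonneg {f : A ⊕ B → ℝ} (hf : f ∈ (bipIndep E).realization) : 0 ≤ massA f :=
  sum_nonneg fun a _ => hf.1 (inl a)

theorem massB_nonneg {f : A ⊕ B → ℝ} (hf : f ∈ (bipIndep E).realization) : 0 ≤ massB f :=
  sum_nonneg fun b _ => hf.1 (inr b)

end Bipartite

section SuspPoint

variable {A B : Type*} [Fintype B] {E : A → B → Prop}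

/-- Weights `t₀`, `t₁` at the poles `s₀ = inr false`, `s₁ = inr true`; the remaining mass is
spread over `B` proportionally to `y`. -/
def suspPoint (t₀ t₁ : ℝ) (y : B → ℝ) : B ⊕ Bool → ℝ :=
  elim (rescale (1 - t₀ - t₁) y) fun p => cond p t₁ t₀

variable {t₀ t₁ : ℝ} {y : B → ℝ}

@[simp]
theorem suspPoint_inl (b : B) : suspPoint t₀ t₁ y (inl b) = rescale (1 - t₀ - t₁) y b := rfl

@[simp]
theorem suspPoint_inr_false : suspPoint t₀ t₁ y (inr false) = t₀ := rfl

@[simp]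
theorem suspPoint_inr_true : suspPoint t₀ t₁ y (inr true) = t₁ := rfl

theorem suspPoint_mem_realization (h₀ : 0 ≤ t₀) (h₁ : 0 ≤ t₁) (h₀₁ : t₀ + t₁ ≤ 1)
    (hpole : t₀ = 0 ∨ t₁ = 0) (hy : ∀ b, 0 ≤ y b) (hvan : ∑ b, y b = 0 → t₀ + t₁ = 1)
    (hwit : ∃ a, ∀ b, rescale (1 - t₀ - t₁) y b ≠ 0 → ¬E a b) :
    suspPoint t₀ t₁ y ∈ (SComplex.suspension (nbrComplex E)).realization := by
  refine mem_suspension_realization_iff.2 ⟨?_, ?_, hwit, hpole⟩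
  · rintro (b | _ | _)
    exacts [rescale_nonneg (by linarith) hy b, h₀, h₁]
  · simp only [suspPoint_inl, suspPoint_inr_false, suspPoint_inr_true]
    rw [sum_rescale fun h => by linarith [hvan h]]
    ring

theorem continuous_suspPoint {Z : Type*} [TopologicalSpace Z] {t₀ t₁ : Z → ℝ} {y : Z → B → ℝ}
    (ht₀ : Continuous t₀) (ht₁ : Continuous t₁) (hy : Continuous y)
    (h₀₁ : ∀ z, t₀ z + t₁ z ≤ 1) (hy0 : ∀ z b, 0 ≤ y z b)
    (hvan : ∀ z, ∑ b, y z b = 0 → t₀ z + t₁ z = 1) :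
    Continuous fun z => suspPoint (t₀ z) (t₁ z) (y z) := by
  refine continuous_sumElim_pi (continuous_rescale (by fun_prop) hy (fun z => ?_) hy0
    fun z h => ?_) (continuous_pi fun p => ?_)
  · linarith [h₀₁ z]
  · linarith [hvan z h]
  · cases p
    exacts [ht₀, ht₁]

end SuspPoint

section SuspTrunc

variable {A B : Type*} [Fintype B] {E : A → B → Prop}

def truncY (g : B ⊕ Bool → ℝ) : B → ℝ := truncate (g (inr false)) fun b => g (inl b)

/-- On `|ΣY|` this is the weight at `s₀` plus all the mass removed by the truncation. -/
def ofSuspMassA (g : B ⊕ Bool → ℝ) : ℝ := 1 - g (inr true) - ∑ b, truncY g b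

/-- A self-map of `|ΣY|` that keeps the support and has the same weight at `s₀` as
`toSuspFun (ofSuspFun E g)`. -/
def suspTruncFun (g : B ⊕ Bool → ℝ) : B ⊕ Bool → ℝ :=
  suspPoint (max (2 * ofSuspMassA g - 1) 0) (g (inr true) * max (1 - 2 * ofSuspMassA g) 0)
    (truncY g)

variable {g : B ⊕ Bool → ℝ}

theorem sum_truncY_le (hg : g ∈ (SComplex.suspension (nbrComplex E)).realization) :
    ∑ b, truncY g b ≤ ∑ b, g (inl b) :=
  sum_truncate_le (hg.1 _) fun b => hg.1 (inl b)

theorem ofSuspMassA_nonneg (hg : g ∈ (SComplex.suspension (nbrComplex E)).realization) :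
    0 ≤ ofSuspMassA g := by
  have hsum := (mem_suspension_realization_iff.1 hg).2.1
  unfold ofSuspMassA
  linarith [sum_truncY_le hg, hg.1 (inr false)]

theorem ofSuspMassA_le_one (hg : g ∈ (SComplex.suspension (nbrComplex E)).realization) :
    ofSuspMassA g ≤ 1 := by
  have : 0 ≤ ∑ b, truncY g b := sum_nonneg fun b _ => truncate_nonneg _ _ b
  unfold ofSuspMassA
  linarith [hg.1 (inr true)]

theorem ofSuspMassA_eq_zero (hg : g ∈ (SComplex.suspension (nbrComplex E)).realization)
    (h : g (inr false) = 0) : ofSuspMassA g = 0 := by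
  have hsum := (mem_suspension_realization_iff.1 hg).2.1
  rw [ofSuspMassA, truncY, h, truncate_zero_left fun b => hg.1 (inl b)]
  linarith

theorem inr_true_eq_zero_of_ofSuspMassA_ne_zero
    (hg : g ∈ (SComplex.suspension (nbrComplex E)).realization) (h : ofSuspMassA g ≠ 0) :
    g (inr true) = 0 :=
  (mem_suspension_realization_iff.1 hg).2.2.2.resolve_left fun h₀ => h (ofSuspMassA_eq_zero hg h₀)

theorem suspTrunc_poles_add_le_one (hg : g ∈ (SComplex.suspension (nbrComplex E)).realization) :
    max (2 * ofSuspMassA g - 1) 0 + g (inr true) * max (1 - 2 * ofSuspMassA g) 0 ≤ 1 := by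
  have hsum := (mem_suspension_realization_iff.1 hg).2.1
  have := ofSuspMassA_nonneg hg
  have := ofSuspMassA_le_one hg
  have := hg.1 (inr true)
  have : g (inr true) ≤ 1 := by
    linarith [hg.1 (inr false), sum_nonneg fun b (_ : b ∈ univ) => hg.1 (inl b)]
  rcases le_total (2 * ofSuspMassA g) 1 with h | h
  · rw [max_eq_right (by linarith), max_eq_left (by linarith)]
    nlinarith
  · rw [max_eq_left (by linarith), max_eq_right (by linarith)]
    linarith

theorem suspTrunc_poles_add_eq_one (hg : g ∈ (SComplex.suspension (nbrComplex E)).realization)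
    (h : ∑ b, truncY g b = 0) :
    max (2 * ofSuspMassA g - 1) 0 + g (inr true) * max (1 - 2 * ofSuspMassA g) 0 = 1 := by
  rcases (mem_suspension_realization_iff.1 hg).2.2.2 with h₀ | h₁
  · have hc := ofSuspMassA_eq_zero hg h₀
    have h₁ : g (inr true) = 1 := by
      unfold ofSuspMassA at hc
      linarith
    norm_num [hc, h₁]
  · have hc : ofSuspMassA g = 1 := by simp [ofSuspMassA, h₁, h]
    norm_num [hc, h₁]

theorem suspTruncFun_mem (hg : g ∈ (SComplex.suspension (nbrComplex E)).realization) :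
    suspTruncFun g ∈ (SComplex.suspension (nbrComplex E)).realization := by
  obtain ⟨hn, -, ⟨a, ha⟩, -⟩ := mem_suspension_realization_iff.1 hg
  refine suspPoint_mem_realization (le_max_right _ _) (mul_nonneg (hn _) (le_max_right _ _))
    (suspTrunc_poles_add_le_one hg) ?_ (truncate_nonneg _ _) (suspTrunc_poles_add_eq_one hg)
    ⟨a, fun b hb => ha b (support_truncate_subset (hn _) (ne_zero_of_rescale_ne_zero hb).2)⟩
  rcases le_total (2 * ofSuspMassA g) 1 with h | h
  · exact .inl (max_eq_right (by linarith))
  · exact .inr (by rw [max_eq_right (by linarith), mul_zero])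

theorem support_suspTruncFun_subset
    (hg : g ∈ (SComplex.suspension (nbrComplex E)).realization) :
    support (suspTruncFun g) ⊆ support g := by
  rintro (b | _ | _) h <;> simp only [Function.mem_support, suspTruncFun, suspPoint_inl,
    suspPoint_inr_false, suspPoint_inr_true] at h
  · exact support_truncate_subset (hg.1 _) (ne_zero_of_rescale_ne_zero h).2
  · exact fun h₀ => h (by norm_num [ofSuspMassA_eq_zero hg h₀])
  · exact left_ne_zero_of_mul h

theorem continuous_suspTruncFun :
    Continuous fun p : (SComplex.suspension (nbrComplex E)).realization =>
      suspTruncFun (p : B ⊕ Bool → ℝ) := by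
  have hc : Continuous fun g : B ⊕ Bool → ℝ => ofSuspMassA g := by
    unfold ofSuspMassA truncY truncate; fun_prop
  have htr : Continuous fun g : B ⊕ Bool → ℝ => truncY g := by
    unfold truncY truncate; fun_prop
  have ht₁ : Continuous fun g : B ⊕ Bool → ℝ => g (inr true) * max (1 - 2 * ofSuspMassA g) 0 := by
    fun_prop
  exact continuous_suspPoint (by fun_prop) (ht₁.comp continuous_subtype_val)
    (htr.comp continuous_subtype_val)
    (fun p => suspTrunc_poles_add_le_one p.2) (fun p => truncate_nonneg _ _)
    (fun p => suspTrunc_poles_add_eq_one p.2)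

variable (E) in
def suspTrunc :
    C((SComplex.suspension (nbrComplex E)).realization,
      (SComplex.suspension (nbrComplex E)).realization) where
  toFun p := ⟨suspTruncFun p, suspTruncFun_mem p.2⟩
  continuous_toFun := continuous_suspTruncFun.subtype_mk _

variable (E) in
theorem id_homotopic_suspTrunc : (ContinuousMap.id _).Homotopic (suspTrunc E) :=
  SComplex.homotopic_id_of_support_subset fun p => support_suspTruncFun_subset p.2

end SuspTrunc

section ToSusp

variable {A B : Type*} [Fintype A] [Fintype B] {E : A → B → Prop}

def excessA (f : A ⊕ B → ℝ) : ℝ := max (massA f - massB f) 0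

def excessB (f : A ⊕ B → ℝ) : ℝ := max (massB f - massA f) 0

theorem excess_cases (f : A ⊕ B → ℝ) :
    (massA f ≤ massB f ∧ excessA f = 0 ∧ excessB f = massB f - massA f) ∨
      (massB f ≤ massA f ∧ excessA f = massA f - massB f ∧ excessB f = 0) := by
  rcases le_total (massA f) (massB f) with h | h
  · exact .inl ⟨h, max_eq_right (by linarith), max_eq_left (by linarith)⟩
  · exact .inr ⟨h, max_eq_left (by linarith), max_eq_right (by linarith)⟩

theorem excessA_nonneg (f : A ⊕ B → ℝ) : 0 ≤ excessA f := le_max_right _ _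

theorem excessB_nonneg (f : A ⊕ B → ℝ) : 0 ≤ excessB f := le_max_right _ _

def toSuspFun (f : A ⊕ B → ℝ) : B ⊕ Bool → ℝ := suspPoint (excessA f) (excessB f) (f ∘ inr)

theorem excessA_add_excessB_le_one {f : A ⊕ B → ℝ} (hf : f ∈ (bipIndep E).realization) :
    excessA f + excessB f ≤ 1 := by
  have hsum := (mem_bipIndep_realization_iff.1 hf).2.1
  have := massA_nonneg hf
  have := massB_nonneg hf
  rcases excess_cases f with ⟨-, hA, hB⟩ | ⟨-, hA, hB⟩ <;> linarith

theorem excess_of_massB_eq_zero {f : A ⊕ B → ℝ} (hf : f ∈ (bipIndep E).realization)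
    (h : massB f = 0) : excessA f = 1 ∧ excessB f = 0 := by
  have hsum := (mem_bipIndep_realization_iff.1 hf).2.1
  rcases excess_cases f with ⟨h', hA, hB⟩ | ⟨h', hA, hB⟩ <;> constructor <;> linarith

theorem toSuspFun_mem [Nonempty A] {f : A ⊕ B → ℝ} (hf : f ∈ (bipIndep E).realization) :
    toSuspFun f ∈ (SComplex.suspension (nbrComplex E)).realization := by
  obtain ⟨hn, hsum, hind⟩ := mem_bipIndep_realization_iff.1 hf
  refine suspPoint_mem_realization (excessA_nonneg f) (excessB_nonneg f)
    (excessA_add_excessB_le_one hf) ?_ (fun b => hn _)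
    (fun h => by simp [excess_of_massB_eq_zero hf h]) ?_
  · rcases excess_cases f with ⟨-, hA, -⟩ | ⟨-, -, hB⟩
    exacts [.inl hA, .inr hB]
  · by_cases hA : massA f = 0
    · -- all the mass sits at the pole `s₁`
      refine ⟨Classical.arbitrary A, fun b hb => absurd ?_ hb⟩
      have : 1 - excessA f - excessB f = 0 := by
        rcases excess_cases f with ⟨h, hA', hB'⟩ | ⟨h, hA', hB'⟩ <;> linarith [massB_nonneg hf]
      simp [this]
    · obtain ⟨a, -, ha⟩ := exists_ne_zero_of_sum_ne_zero hA
      exact ⟨a, fun b hb => hind a b ha (ne_zero_of_rescale_ne_zero hb).2⟩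

theorem continuous_toSuspFun :
    Continuous fun p : (bipIndep E).realization => toSuspFun (p : A ⊕ B → ℝ) := by
  have hA : Continuous fun f : A ⊕ B → ℝ => excessA f := by
    unfold excessA massA massB; fun_prop
  have hB : Continuous fun f : A ⊕ B → ℝ => excessB f := by
    unfold excessB massA massB; fun_prop
  exact continuous_suspPoint (hA.comp continuous_subtype_val) (hB.comp continuous_subtype_val)
    (continuous_pi fun b => (continuous_apply (inr b)).comp continuous_subtype_val)
    (fun p => excessA_add_excessB_le_one p.2) (fun p b => p.2.1 (inr b))
    (fun p h => by simp [excess_of_massB_eq_zero p.2 h])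

variable (E) in
def toSusp [Nonempty A] :
    C((bipIndep E).realization, (SComplex.suspension (nbrComplex E)).realization) where
  toFun p := ⟨toSuspFun p, toSuspFun_mem p.2⟩
  continuous_toFun := continuous_toSuspFun.subtype_mk _

end ToSusp

section BipTrunc

variable {A B : Type*} [Fintype A] [Fintype B] {E : A → B → Prop}

def truncB (f : A ⊕ B → ℝ) : B → ℝ := truncate (excessA f) (rescale (1 - excessA f) (f ∘ inr))

/-- A self-map of `|X|` that keeps the support; its `B`-part agrees with that of
`ofSuspFun (toSuspFun f)` when `massB f ≤ massA f`. -/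
def bipTruncFun (f : A ⊕ B → ℝ) : A ⊕ B → ℝ :=
  elim (rescale (1 - ∑ b, truncB f b) (f ∘ inl)) (truncB f)

variable {f : A ⊕ B → ℝ}

theorem toSuspFun_inl (h : excessB f = 0) :
    (fun b => toSuspFun f (inl b)) = rescale (1 - excessA f) (f ∘ inr) := by
  ext b
  simp [toSuspFun, h]

theorem truncY_toSuspFun (h : excessB f = 0) : truncY (toSuspFun f) = truncB f := by
  rw [truncY, toSuspFun_inl h]
  rfl

theorem one_sub_excessA_nonneg (hf : f ∈ (bipIndep E).realization) : 0 ≤ 1 - excessA f := by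
  linarith [excessA_add_excessB_le_one hf, excessB_nonneg f]

theorem sum_rescale_one_sub_excessA (hf : f ∈ (bipIndep E).realization) :
    ∑ b, rescale (1 - excessA f) (f ∘ inr) b = 1 - excessA f :=
  sum_rescale fun h => by linarith [(excess_of_massB_eq_zero hf h).1]

theorem sum_truncB_le_one (hf : f ∈ (bipIndep E).realization) : ∑ b, truncB f b ≤ 1 :=
  calc ∑ b, truncB f b ≤ ∑ b, rescale (1 - excessA f) (f ∘ inr) b :=
        sum_truncate_le (excessA_nonneg f)
          (rescale_nonneg (one_sub_excessA_nonneg hf) fun b => hf.1 (inr b))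
    _ = 1 - excessA f := sum_rescale_one_sub_excessA hf
    _ ≤ 1 := by linarith [excessA_nonneg f]

theorem sum_truncB_eq_one (hf : f ∈ (bipIndep E).realization) (h : massA f ≤ massB f) :
    ∑ b, truncB f b = 1 := by
  have hA : excessA f = 0 := max_eq_right (by linarith)
  have := sum_rescale_one_sub_excessA hf
  rw [hA, sub_zero] at this
  rwa [truncB, hA, sub_zero,
    truncate_zero_left (rescale_nonneg (u := f ∘ inr) zero_le_one fun b => hf.1 (inr b))]

theorem support_bipTruncFun_subset (f : A ⊕ B → ℝ) : support (bipTruncFun f) ⊆ support f := by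
  rintro (a | b) h
  · exact (ne_zero_of_rescale_ne_zero h).2
  · exact (ne_zero_of_rescale_ne_zero (support_truncate_subset (excessA_nonneg f) h)).2

theorem bipTruncFun_mem (hf : f ∈ (bipIndep E).realization) :
    bipTruncFun f ∈ (bipIndep E).realization := by
  obtain ⟨hn, hsum, hcarr⟩ := SComplex.mem_realization_iff.1 hf
  have hAB := (mem_bipIndep_realization_iff.1 hf).2.1
  refine SComplex.mem_realization_iff.2 ⟨?_, ?_, hcarr.mono (support_bipTruncFun_subset f)⟩
  · rintro (a | b)
    · exact rescale_nonneg (by linarith [sum_truncB_le_one hf]) (fun a => hn (inl a)) a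
    · exact truncate_nonneg _ _ b
  · rw [Fintype.sum_sum_type]
    simp only [bipTruncFun, Sum.elim_inl, Sum.elim_inr]
    rw [sum_rescale fun h => by
      have hA : massA f = 0 := h
      rw [sum_truncB_eq_one hf (by linarith [massB_nonneg hf]), sub_self]]
    ring

theorem continuous_bipTruncFun :
    Continuous fun p : (bipIndep E).realization => bipTruncFun (p : A ⊕ B → ℝ) := by
  have hexc : Continuous fun f : A ⊕ B → ℝ => excessA f := by
    unfold excessA massA massB; fun_prop
  have hu : Continuous fun p : (bipIndep E).realization =>
      rescale (1 - excessA (p : A ⊕ B → ℝ)) ((p : A ⊕ B → ℝ) ∘ inr) :=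
    continuous_rescale (by fun_prop)
      (continuous_pi fun b => (continuous_apply (inr b)).comp continuous_subtype_val)
      (fun p => one_sub_excessA_nonneg p.2) (fun p b => p.2.1 (inr b))
      (fun p h => by rw [(excess_of_massB_eq_zero p.2 h).1, sub_self])
  have htr : Continuous fun p : (bipIndep E).realization => truncB (p : A ⊕ B → ℝ) := by
    unfold truncB truncate; fun_prop
  refine continuous_sumElim_pi (continuous_rescale (by fun_prop)
    (continuous_pi fun a => (continuous_apply (inl a)).comp continuous_subtype_val)
    (fun p => by linarith [sum_truncB_le_one p.2]) (fun p a => p.2.1 (inl a))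
    fun p h => ?_) htr
  have hA : massA (p : A ⊕ B → ℝ) = 0 := h
  rw [sum_truncB_eq_one p.2 (by linarith [massB_nonneg p.2]), sub_self]

variable (E) in
def bipTrunc : C((bipIndep E).realization, (bipIndep E).realization) where
  toFun p := ⟨bipTruncFun p, bipTruncFun_mem p.2⟩
  continuous_toFun := continuous_bipTruncFun.subtype_mk _

variable (E) in
theorem id_homotopic_bipTrunc : (ContinuousMap.id _).Homotopic (bipTrunc E) :=
  SComplex.homotopic_id_of_support_subset fun _ => support_bipTruncFun_subset _

end BipTrunc

section OfSusp

variable {A B : Type*} [Fintype A] [Fintype B] (E : A → B → Prop)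

def ofSuspFun (g : B ⊕ Bool → ℝ) : A ⊕ B → ℝ :=
  elim (rescale (ofSuspMassA g) (witnessWeight E (g (inr false)) fun b => g (inl b)))
    fun b => truncY g b + g (inr true) / Fintype.card B

variable {E} {g : B ⊕ Bool → ℝ}

theorem massA_ofSuspFun (hg : g ∈ (SComplex.suspension (nbrComplex E)).realization) :
    massA (ofSuspFun E g) = ofSuspMassA g :=
  sum_rescale fun h => ofSuspMassA_eq_zero hg <| eq_zero_of_sum_witnessWeight_eq_zero (hg.1 _)
    (mem_suspension_realization_iff.1 hg).2.2.1 h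

theorem massB_ofSuspFun [Nonempty B] :
    massB (ofSuspFun E g) = ∑ b, truncY g b + g (inr true) := by
  have : (Fintype.card B : ℝ) ≠ 0 := Nat.cast_ne_zero.2 Fintype.card_ne_zero
  simp [massB, ofSuspFun, sum_add_distrib, mul_div_cancel₀ _ this]

theorem ofSuspFun_mem [Nonempty B] (hg : g ∈ (SComplex.suspension (nbrComplex E)).realization) :
    ofSuspFun E g ∈ (bipIndep E).realization := by
  refine mem_bipIndep_realization_iff.2 ⟨?_, ?_, fun a b ha hb => ?_⟩
  · rintro (a | b)
    · exact rescale_nonneg (ofSuspMassA_nonneg hg) witnessWeight_nonneg a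
    · exact add_nonneg (truncate_nonneg _ _ b) (div_nonneg (hg.1 _) (Nat.cast_nonneg _))
  · rw [massA_ofSuspFun hg, massB_ofSuspFun, ofSuspMassA]
    ring
  · obtain ⟨hc, hw⟩ := ne_zero_of_rescale_ne_zero ha
    have hb' : truncY g b ≠ 0 := by
      simpa [ofSuspFun, inr_true_eq_zero_of_ofSuspMassA_ne_zero hg hc] using hb
    exact not_adj_of_witnessWeight_ne_zero (fun b => hg.1 (inl b)) hw hb'

theorem continuous_ofSuspFun :
    Continuous fun p : (SComplex.suspension (nbrComplex E)).realization =>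
      ofSuspFun E (p : B ⊕ Bool → ℝ) := by
  have hc : Continuous fun g : B ⊕ Bool → ℝ => ofSuspMassA g := by
    unfold ofSuspMassA truncY truncate; fun_prop
  have hw : Continuous fun g : B ⊕ Bool → ℝ =>
      witnessWeight E (g (inr false)) fun b => g (inl b) := by
    unfold witnessWeight nbrMass; fun_prop
  have htr : Continuous fun g : B ⊕ Bool → ℝ => truncY g := by
    unfold truncY truncate; fun_prop
  refine continuous_sumElim_pi (continuous_rescale (hc.comp continuous_subtype_val)
    (hw.comp continuous_subtype_val) (fun p => ofSuspMassA_nonneg p.2)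
    (fun p => witnessWeight_nonneg) fun p h => ?_)
    ((show Continuous fun g : B ⊕ Bool → ℝ => fun b => truncY g b + g (inr true) / Fintype.card B
      by fun_prop).comp continuous_subtype_val)
  exact ofSuspMassA_eq_zero p.2 <| eq_zero_of_sum_witnessWeight_eq_zero (p.2.1 _)
    (mem_suspension_realization_iff.1 p.2).2.2.1 h

theorem excessA_ofSuspFun [Nonempty B]
    (hg : g ∈ (SComplex.suspension (nbrComplex E)).realization) :
    excessA (ofSuspFun E g) = max (2 * ofSuspMassA g - 1) 0 := by
  rw [excessA, massA_ofSuspFun hg, massB_ofSuspFun, ofSuspMassA]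
  ring_nf

theorem excessB_ofSuspFun [Nonempty B]
    (hg : g ∈ (SComplex.suspension (nbrComplex E)).realization) :
    excessB (ofSuspFun E g) = max (1 - 2 * ofSuspMassA g) 0 := by
  rw [excessB, massA_ofSuspFun hg, massB_ofSuspFun, ofSuspMassA]
  ring_nf

variable (E) in
def ofSusp [Nonempty B] :
    C((SComplex.suspension (nbrComplex E)).realization, (bipIndep E).realization) where
  toFun p := ⟨ofSuspFun E p, ofSuspFun_mem p.2⟩
  continuous_toFun := continuous_ofSuspFun.subtype_mk _

end OfSusp

section HomotopyEquiv

variable {A B : Type*} [Fintype A] [Fintype B] (E : A → B → Prop)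

theorem bipTrunc_homotopic_ofSusp_comp_toSusp [Nonempty A] [Nonempty B] :
    (bipTrunc E).Homotopic ((ofSusp E).comp (toSusp E)) := by
  refine SComplex.homotopic_of_carries fun ⟨f, hf⟩ => (carries_bipIndep_iff E).2 fun a b ha hb => ?_
  change bipTruncFun f (inl a) ≠ 0 ∨ ofSuspFun E (toSuspFun f) (inl a) ≠ 0 at ha
  change bipTruncFun f (inr b) ≠ 0 ∨ ofSuspFun E (toSuspFun f) (inr b) ≠ 0 at hb
  rcases excess_cases f with ⟨h, hA, -⟩ | ⟨-, hA, hB⟩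
  · -- both maps put no mass on `A`
    have h₁ : bipTruncFun f (inl a) = 0 := by simp [bipTruncFun, sum_truncB_eq_one hf h]
    have h₂ : ofSuspFun E (toSuspFun f) (inl a) = 0 := by
      simp [ofSuspFun, ofSuspMassA_eq_zero (toSuspFun_mem hf) (by simpa [toSuspFun] using hA)]
    simp [h₁, h₂] at ha
  · have hb' : truncB f b ≠ 0 := by
      rcases hb with hb | hb
      · exact hb
      · have hs₁ : toSuspFun f (inr true) = 0 := hB
        simpa [ofSuspFun, truncY_toSuspFun hB, hs₁] using hb
    rcases ha with ha | ha
    · exact (mem_bipIndep_realization_iff.1 hf).2.2 a b (ne_zero_of_rescale_ne_zero ha).2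
        (ne_zero_of_rescale_ne_zero (support_truncate_subset (excessA_nonneg f) hb')).2
    · have hw := (ne_zero_of_rescale_ne_zero ha).2
      rw [toSuspFun_inl hB] at hw
      exact not_adj_of_witnessWeight_ne_zero
        (rescale_nonneg (one_sub_excessA_nonneg hf) fun b => hf.1 (inr b)) hw hb'

theorem suspTrunc_homotopic_toSusp_comp_ofSusp [Nonempty A] [Nonempty B] :
    (suspTrunc E).Homotopic ((toSusp E).comp (ofSusp E)) := by
  refine SComplex.homotopic_of_carries fun ⟨g, hg⟩ =>
    (carries_suspension_nbrComplex_iff E).2 ?_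
  obtain ⟨hn, -, ⟨a, ha⟩, -⟩ := mem_suspension_realization_iff.1 hg
  have hA := excessA_ofSuspFun hg
  have hB := excessB_ofSuspFun hg
  refine ⟨⟨a, fun b hb => ha b ?_⟩, fun ⟨h₀, h₁⟩ => ?_⟩
  · change suspTruncFun g (inl b) ≠ 0 ∨ toSuspFun (ofSuspFun E g) (inl b) ≠ 0 at hb
    rcases hb with hb | hb
    · exact support_truncate_subset (hn _) (ne_zero_of_rescale_ne_zero hb).2
    · obtain ⟨hk, hb⟩ := ne_zero_of_rescale_ne_zero hb
      have hc : ofSuspMassA g ≠ 0 := fun hc => hk (by norm_num [hA, hB, hc])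
      have htr : truncY g b ≠ 0 := by
        simpa [ofSuspFun, inr_true_eq_zero_of_ofSuspMassA_ne_zero hg hc] using hb
      exact support_truncate_subset (hn _) htr
  · change suspTruncFun g (inr false) ≠ 0 ∨ toSuspFun (ofSuspFun E g) (inr false) ≠ 0 at h₀
    change suspTruncFun g (inr true) ≠ 0 ∨ toSuspFun (ofSuspFun E g) (inr true) ≠ 0 at h₁
    have hgt : max (2 * ofSuspMassA g - 1) 0 ≠ 0 := by
      rcases h₀ with h₀ | h₀ <;> simpa [suspTruncFun, toSuspFun, hA] using h₀
    have hlt : max (1 - 2 * ofSuspMassA g) 0 ≠ 0 := by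
      rcases h₁ with h₁ | h₁
      · exact right_ne_zero_of_mul (by simpa [suspTruncFun] using h₁)
      · simpa [toSuspFun, hB] using h₁
    linarith [pos_of_max_zero_ne_zero hgt, pos_of_max_zero_ne_zero hlt]

end HomotopyEquiv

/-- Let `X` be the independence complex of a bipartite graph
with (nonempty) parts `A`, `B` and edge relation `E`, and let `Y` be the
complex on `B` of all subsets `F` such that some `a ∈ A` has no edge to any
element of `F`.  Then `X` is homotopy equivalent to the suspension of `Y`. -/
theorem statement_2 {A B : Type u} [Fintype A] [Fintype B] [Nonempty A]
    [Nonempty B] (E : A → B → Prop) :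
    SComplex.HEquiv (bipIndep E) (SComplex.suspension (nbrComplex E)) :=
  ⟨{ toFun := toSusp E
     invFun := ofSusp E
     left_inv := ((id_homotopic_bipTrunc E).trans (bipTrunc_homotopic_ofSusp_comp_toSusp E)).symm
     right_inv :=
      ((id_homotopic_suspTrunc E).trans (suspTrunc_homotopic_toSusp_comp_ofSusp E)).symm }⟩

end
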